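/- Let V_c ∈ (0,d0) satisfy Λ(V_c) = 0 and Λ'(V_c) < 0. Then for every ε > 0 there exist δ* > 0 and t* ≥ t0 such that for every τ0 ≥ t* and every admissible solution v with |v(τ0) − V_c| ≤ δ*, one has |v(t) − V_c| < ε for all t ≥ τ0. Moreover, if n ≤ q, then every such solution satisfies v(t) → V_c as t → ∞. -/

import Mathlib

/-- An admissible solution of the reduced equation
`v'(t) = t^{−n/q}·Λ(v(t)) + ρ(t)` on `[τ0,∞)` with values in `[0,d0]`, where
`|ρ(t)| ≤ M·t^{−(n+1)/q}`. -/
def IsAdmissibleCycle (q n : ℕ) (d0 M τ0 : ℝ) (Λ : ℝ → ℝ) (v : ℝ → ℝ) : Prop :=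
  (∀ t ≥ τ0, v t ∈ Set.Icc (0:ℝ) d0) ∧
  ∃ ρ : ℝ → ℝ,
    (∀ t ≥ τ0, |ρ t| ≤ M * t ^ (-((n:ℝ) + 1)/(q:ℝ))) ∧
    (∀ t ≥ τ0, HasDerivAt v (t ^ (-(n:ℝ)/(q:ℝ)) * Λ (v t) + ρ t) t)

/-!
Near `Vc`, with `k = -Λ'(Vc)/2`, the mean value theorem gives `Λ x ≤ -k (x - Vc)` just above
`Vc`, while the remainder is `t^{-n/q}` times `M t^{-1/q}`, which for large `t` is at most half
of `k μ`. So on the level `v = Vc + μ` the right-hand side is at most `-(k μ / 2) t^{-n/q} < 0`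
and the solution cannot cross it upwards: this is stability. If `n ≤ q` then `t^{-n/q} ≥ 1/t`,
so as long as `v ≥ Vc + μ` it decreases at least like `-(k μ / 2) log t`; being bounded, it
must drop below `Vc + μ`, and then stays there. The reflection `v ↦ 2 Vc - v` turns the
bounds from below into bounds from above.
-/

open Set Filter Topology

theorem ContDiffAt.exists_sub_le_mul_sub_of_deriv_lt {f : ℝ → ℝ} {x₀ C : ℝ}
    (hf : ContDiffAt ℝ 1 f x₀) (hC : deriv f x₀ < C) :
    ∃ δ > 0, ∀ x ∈ Ioo (x₀ - δ) (x₀ + δ), ∀ y ∈ Ioo (x₀ - δ) (x₀ + δ),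
      x ≤ y → f y - f x ≤ C * (y - x) := by
  obtain ⟨u, hu, hfu⟩ := hf.contDiffOn le_rfl (by simp)
  have hfU : ContDiffOn ℝ 1 f (interior u) := hfu.mono interior_subset
  have hderiv : ContinuousAt (deriv f) x₀ :=
    (hfU.continuousOn_deriv_of_isOpen isOpen_interior le_rfl).continuousAt
      (isOpen_interior.mem_nhds (mem_interior_iff_mem_nhds.2 hu))
  obtain ⟨δ, hδ, hball⟩ := Metric.mem_nhds_iff.1
    (inter_mem (interior_mem_nhds.2 hu) (hderiv.preimage_mem_nhds (Iio_mem_nhds hC)))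
  refine ⟨δ, hδ, ?_⟩
  rw [← Real.ball_eq_Ioo]
  exact (convex_ball x₀ δ).image_sub_le_mul_sub_of_deriv_le
    (hfU.continuousOn.mono fun x hx => (hball hx).1)
    ((hfU.differentiableOn one_ne_zero).mono fun x hx => (hball (interior_subset hx)).1)
    (fun x hx => (hball (interior_subset hx)).2.le)

theorem ContDiffAt.eventually_le_neg_mul_sub_of_deriv_lt {f : ℝ → ℝ} {x₀ k : ℝ}
    (hf : ContDiffAt ℝ 1 f x₀) (hf0 : f x₀ = 0) (hk : deriv f x₀ < -k) :
    ∀ᶠ η in 𝓝[>] 0, (∀ x ∈ Icc x₀ (x₀ + η), f x ≤ -k * (x - x₀)) ∧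
      ∀ x ∈ Icc (x₀ - η) x₀, k * (x₀ - x) ≤ f x := by
  obtain ⟨δ, hδ, hslope⟩ := hf.exists_sub_le_mul_sub_of_deriv_lt hk
  filter_upwards [Ioo_mem_nhdsGT hδ] with η hη
  have hnear : ∀ x ∈ Icc (x₀ - η) (x₀ + η), x ∈ Ioo (x₀ - δ) (x₀ + δ) :=
    fun x hx => ⟨by linarith [hx.1, hη.2], by linarith [hx.2, hη.2]⟩
  have hx₀ : x₀ ∈ Ioo (x₀ - δ) (x₀ + δ) :=
    hnear x₀ ⟨by linarith [hη.1], by linarith [hη.1]⟩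
  refine ⟨fun x hx => ?_, fun x hx => ?_⟩
  · simpa [hf0] using hslope x₀ hx₀ x (hnear x ⟨by linarith [hx.1, hη.1], hx.2⟩) hx.1
  · linarith [hslope x (hnear x ⟨hx.1, by linarith [hx.2, hη.1]⟩) x₀ hx₀ hx.2]

theorem le_of_hasDerivAt_of_eq_imp_neg {f f' : ℝ → ℝ} {a B : ℝ}
    (hf : ∀ t ≥ a, HasDerivAt f (f' t) t) (ha : f a ≤ B)
    (hB : ∀ t ≥ a, f t = B → f' t < 0) : ∀ t ≥ a, f t ≤ B := fun _ ht =>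
  image_le_of_deriv_right_lt_deriv_boundary (B' := fun _ => 0)
    (fun x hx => (hf x hx.1).continuousAt.continuousWithinAt)
    (fun x hx => (hf x hx.1).hasDerivWithinAt) ha (fun _ => hasDerivAt_const _ _)
    (fun x hx => hB x hx.1) ⟨ht, le_rfl⟩

section InverseDrift

variable {f f' : ℝ → ℝ} {a B L c : ℝ}

theorem exists_le_of_deriv_le_neg_div (ha : 0 < a) (hc : 0 < c)
    (hf : ∀ t ≥ a, HasDerivAt f (f' t) t) (hL : ∀ t ≥ a, L ≤ f t)
    (hf' : ∀ t ≥ a, B ≤ f t → f' t ≤ -(c / t)) : ∃ t ≥ a, f t ≤ B := by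
  by_contra! hgt
  have hlog_deriv : ∀ t ≥ a, HasDerivAt (fun t => f a - c * (Real.log t - Real.log a))
      (-(c / t)) t := fun t ht => by
    simpa [div_eq_mul_inv] using
      (((Real.hasDerivAt_log (ha.trans_le ht).ne').sub_const (Real.log a)).const_mul c).const_sub
        (f a)
  have hlog : ∀ t ≥ a, f t ≤ f a - c * (Real.log t - Real.log a) := fun t ht =>
    image_le_of_deriv_right_le_deriv_boundary
      (fun x hx => (hf x hx.1).continuousAt.continuousWithinAt)
      (fun x hx => (hf x hx.1).hasDerivWithinAt) (by simp)
      (fun x hx => (hlog_deriv x hx.1).continuousAt.continuousWithinAt)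
      (fun x hx => (hlog_deriv x hx.1).hasDerivWithinAt)
      (fun x hx => hf' x hx.1 (hgt x hx.1).le) ⟨ht, le_rfl⟩
  obtain ⟨t, hta, ht⟩ := ((eventually_ge_atTop a).and
    (Real.tendsto_log_atTop.eventually_gt_atTop ((f a - L) / c + Real.log a))).exists
  have hdrop : f a - L < c * (Real.log t - Real.log a) := by
    rw [← div_lt_iff₀' hc]
    linarith
  linarith [hL t hta, hlog t hta]

theorem eventually_le_of_deriv_le_neg_div (ha : 0 < a) (hc : 0 < c)
    (hf : ∀ t ≥ a, HasDerivAt f (f' t) t) (hL : ∀ t ≥ a, L ≤ f t)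
    (hf' : ∀ t ≥ a, B ≤ f t → f' t ≤ -(c / t)) : ∀ᶠ t in atTop, f t ≤ B := by
  obtain ⟨t₁, ht₁, hB⟩ := exists_le_of_deriv_le_neg_div ha hc hf hL hf'
  refine eventually_atTop.2 ⟨t₁, le_of_hasDerivAt_of_eq_imp_neg
    (fun t ht => hf t (ht₁.trans ht)) hB fun t ht hft => ?_⟩
  have hpos : 0 < c / t := div_pos hc (by linarith)
  linarith [hf' t (ht₁.trans ht) hft.ge]

end InverseDrift

theorem eventually_mul_rpow_neg_le {q : ℕ} (hq : 0 < q) (M : ℝ) {ε : ℝ} (hε : 0 < ε) :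
    ∀ᶠ t in atTop, M * t ^ (-1 / (q : ℝ)) ≤ ε := by
  have hlim : Tendsto (fun t : ℝ => M * t ^ (-1 / (q : ℝ))) atTop (𝓝 0) := by
    simpa [neg_div] using (tendsto_rpow_neg_atTop (by positivity : (0 : ℝ) < 1 / q)).const_mul M
  exact hlim.eventually (ge_mem_nhds hε)

theorem rpow_mul_add_le_of_le_neg {q n : ℕ} {M a t y r : ℝ} (ht : 0 < t) (hy : y ≤ -a)
    (hr : |r| ≤ M * t ^ (-((n : ℝ) + 1) / q)) (hsmall : M * t ^ (-1 / (q : ℝ)) ≤ a / 2) :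
    t ^ (-(n : ℝ) / q) * y + r ≤ -(a / 2) * t ^ (-(n : ℝ) / q) := by
  have hP : 0 < t ^ (-(n : ℝ) / q) := Real.rpow_pos_of_pos ht _
  have hr' : r ≤ t ^ (-(n : ℝ) / q) * (a / 2) := calc
    r ≤ M * t ^ (-((n : ℝ) + 1) / q) := (le_abs_self r).trans hr
    _ = t ^ (-(n : ℝ) / q) * (M * t ^ (-1 / (q : ℝ))) := by
      rw [mul_left_comm, ← Real.rpow_add ht]
      ring_nf
    _ ≤ t ^ (-(n : ℝ) / q) * (a / 2) := mul_le_mul_of_nonneg_left hsmall hP.le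
  nlinarith

theorem neg_reflect_le_of_le {Λ : ℝ → ℝ} {k η Vc : ℝ}
    (hΛ : ∀ x ∈ Icc (Vc - η) Vc, k * (Vc - x) ≤ Λ x) :
    ∀ x ∈ Icc Vc (Vc + η), -Λ (2 * Vc - x) ≤ -k * (x - Vc) := fun x hx => by
  linarith [hΛ (2 * Vc - x) ⟨by linarith [hx.2], by linarith [hx.1]⟩]

def IsPerturbedSolution (q n : ℕ) (M τ0 : ℝ) (Λ v : ℝ → ℝ) : Prop :=
  ∃ ρ : ℝ → ℝ, (∀ t ≥ τ0, |ρ t| ≤ M * t ^ (-((n : ℝ) + 1) / (q : ℝ))) ∧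
    ∀ t ≥ τ0, HasDerivAt v (t ^ (-(n : ℝ) / (q : ℝ)) * Λ (v t) + ρ t) t

namespace IsPerturbedSolution

variable {q n : ℕ} {M τ0 k η Vc : ℝ} {Λ v : ℝ → ℝ}

theorem reflect (hv : IsPerturbedSolution q n M τ0 Λ v) (c : ℝ) :
    IsPerturbedSolution q n M τ0 (fun x => -Λ (2 * c - x)) (fun t => 2 * c - v t) := by
  obtain ⟨ρ, hρ, hder⟩ := hv
  refine ⟨fun t => -ρ t, fun t ht => by simpa using hρ t ht, fun t ht => ?_⟩
  refine ((hder t ht).const_sub (2 * c)).congr_deriv ?_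
  simp only [sub_sub_cancel]
  ring

theorem forall_le (hv : IsPerturbedSolution q n M τ0 Λ v)
    (hΛ : ∀ x ∈ Icc Vc (Vc + η), Λ x ≤ -k * (x - Vc)) (hk : 0 < k) (hη : 0 < η)
    (hτ0 : 0 < τ0) (hsmall : ∀ t ≥ τ0, M * t ^ (-1 / (q : ℝ)) ≤ k * η / 2)
    (h0 : v τ0 ≤ Vc + η) : ∀ t ≥ τ0, v t ≤ Vc + η := by
  obtain ⟨ρ, hρ, hder⟩ := hv
  refine le_of_hasDerivAt_of_eq_imp_neg hder h0 fun t ht hvt => ?_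
  have ht0 : 0 < t := hτ0.trans_le ht
  have hΛv : Λ (v t) ≤ -(k * η) := by
    simpa [hvt, neg_mul] using hΛ (v t) ⟨by linarith, hvt.le⟩
  have hdrift := rpow_mul_add_le_of_le_neg ht0 hΛv (hρ t ht) (hsmall t ht)
  have hpos : 0 < k * η / 2 * t ^ (-(n : ℝ) / q) := by positivity
  linarith

theorem eventually_le (hv : IsPerturbedSolution q n M τ0 Λ v)
    (hΛ : ∀ x ∈ Icc Vc (Vc + η), Λ x ≤ -k * (x - Vc)) (hk : 0 < k) (hq : 0 < q)
    (hnq : n ≤ q) (hτ0 : 0 < τ0) (hclose : ∀ t ≥ τ0, |v t - Vc| ≤ η) {μ : ℝ} (hμ : 0 < μ) :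
    ∀ᶠ t in atTop, v t ≤ Vc + μ := by
  obtain ⟨ρ, hρ, hder⟩ := hv
  rcases le_or_gt η μ with hημ | hμη
  · exact eventually_atTop.2 ⟨τ0, fun t ht => by linarith [(abs_le.1 (hclose t ht)).2]⟩
  obtain ⟨T, hT⟩ := eventually_atTop.1 ((eventually_ge_atTop (max τ0 1)).and
    (eventually_mul_rpow_neg_le hq M (by positivity : 0 < k * μ / 2)))
  have hTτ0 : τ0 ≤ T := (le_max_left _ _).trans (hT T le_rfl).1
  have hT1 : 1 ≤ T := (le_max_right _ _).trans (hT T le_rfl).1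
  refine eventually_le_of_deriv_le_neg_div (a := T) (L := Vc - η) (c := k * μ / 2)
    (by linarith) (by positivity) (fun t ht => hder t (hTτ0.trans ht))
    (fun t ht => by linarith [(abs_le.1 (hclose t (hTτ0.trans ht))).1]) fun t ht hvt => ?_
  have ht1 : 1 ≤ t := hT1.trans ht
  have htτ0 : τ0 ≤ t := hTτ0.trans ht
  have hΛv : Λ (v t) ≤ -(k * μ) := calc
    Λ (v t) ≤ -k * (v t - Vc) :=
      hΛ (v t) ⟨by linarith, by linarith [(abs_le.1 (hclose t htτ0)).2]⟩
    _ ≤ -(k * μ) := by nlinarith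
  have hdrift := rpow_mul_add_le_of_le_neg (by linarith) hΛv (hρ t htτ0) (hT t ht).2
  have hinv : t⁻¹ ≤ t ^ (-(n : ℝ) / q) := by
    rw [← Real.rpow_neg_one]
    refine Real.rpow_le_rpow_of_exponent_le ht1 ?_
    rw [neg_div, neg_le_neg_iff, div_le_one (by exact_mod_cast hq)]
    exact_mod_cast hnq
  calc _ ≤ -(k * μ / 2) * t ^ (-(n : ℝ) / q) := hdrift
    _ ≤ -(k * μ / 2) * t⁻¹ := mul_le_mul_of_nonpos_left hinv (by linarith [mul_pos hk hμ])
    _ = -(k * μ / 2 / t) := by ring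

theorem abs_sub_le (hv : IsPerturbedSolution q n M τ0 Λ v)
    (habove : ∀ x ∈ Icc Vc (Vc + η), Λ x ≤ -k * (x - Vc))
    (hbelow : ∀ x ∈ Icc (Vc - η) Vc, k * (Vc - x) ≤ Λ x) (hk : 0 < k) (hη : 0 < η)
    (hτ0 : 0 < τ0) (hsmall : ∀ t ≥ τ0, M * t ^ (-1 / (q : ℝ)) ≤ k * η / 2)
    (h0 : |v τ0 - Vc| ≤ η) : ∀ t ≥ τ0, |v t - Vc| ≤ η := by
  have hup := hv.forall_le habove hk hη hτ0 hsmall (by linarith [(abs_le.1 h0).2])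
  have hlo := (hv.reflect Vc).forall_le (neg_reflect_le_of_le hbelow) hk hη hτ0 hsmall
    (by linarith [(abs_le.1 h0).1])
  exact fun t ht => abs_le.2 ⟨by linarith [hlo t ht], by linarith [hup t ht]⟩

theorem tendsto (hv : IsPerturbedSolution q n M τ0 Λ v)
    (habove : ∀ x ∈ Icc Vc (Vc + η), Λ x ≤ -k * (x - Vc))
    (hbelow : ∀ x ∈ Icc (Vc - η) Vc, k * (Vc - x) ≤ Λ x) (hk : 0 < k) (hq : 0 < q)
    (hnq : n ≤ q) (hτ0 : 0 < τ0) (hclose : ∀ t ≥ τ0, |v t - Vc| ≤ η) :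
    Tendsto v atTop (𝓝 Vc) := by
  have hclose' : ∀ t ≥ τ0, |2 * Vc - v t - Vc| ≤ η := fun t ht => by
    rw [show 2 * Vc - v t - Vc = -(v t - Vc) by ring, abs_neg]
    exact hclose t ht
  refine Metric.tendsto_nhds.2 fun e he => ?_
  filter_upwards [hv.eventually_le habove hk hq hnq hτ0 hclose (half_pos he),
    (hv.reflect Vc).eventually_le (neg_reflect_le_of_le hbelow) hk hq hnq hτ0 hclose'
      (half_pos he)] with t hup hlo
  rw [Real.dist_eq, abs_lt]
  constructor <;> linarith

end IsPerturbedSolution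

theorem IsAdmissibleCycle.isPerturbedSolution {q n : ℕ} {d0 M τ0 : ℝ} {Λ v : ℝ → ℝ}
    (hv : IsAdmissibleCycle q n d0 M τ0 Λ v) : IsPerturbedSolution q n M τ0 Λ v :=
  hv.2

theorem stable_limit_cycle_general
    (q n : ℕ) (hq : 0 < q)
    (d0 t0 M : ℝ)
    (Λ : ℝ → ℝ) (hΛ : ContDiffOn ℝ 1 Λ (Set.Icc (0:ℝ) d0))
    (Vc : ℝ) (hVc : Vc ∈ Set.Ioo (0:ℝ) d0) (hΛVc : Λ Vc = 0)
    (hΛ' : deriv Λ Vc < 0) :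
    ∀ ε > 0, ∃ δ > 0, ∃ ts ≥ t0, ∀ τ0 ≥ ts,
      ∀ v : ℝ → ℝ, IsAdmissibleCycle q n d0 M τ0 Λ v → |v τ0 - Vc| ≤ δ →
        (∀ t ≥ τ0, |v t - Vc| < ε) ∧
        (n ≤ q → Filter.Tendsto v Filter.atTop (nhds Vc)) := by
  intro ε hε
  obtain ⟨k, hk, hkΛ'⟩ : ∃ k > 0, deriv Λ Vc < -k := ⟨-deriv Λ Vc / 2, by linarith, by linarith⟩
  have hΛVc_C1 : ContDiffAt ℝ 1 Λ Vc := hΛ.contDiffAt (Icc_mem_nhds hVc.1 hVc.2)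
  obtain ⟨η, ⟨habove, hbelow⟩, hη, hηε⟩ :=
    ((hΛVc_C1.eventually_le_neg_mul_sub_of_deriv_lt hΛVc hkΛ').and
      (Ioo_mem_nhdsGT (half_pos hε))).exists
  obtain ⟨ts, hts⟩ := eventually_atTop.1 ((eventually_ge_atTop (max t0 1)).and
    (eventually_mul_rpow_neg_le hq M (by positivity : 0 < k * η / 2)))
  refine ⟨η, hη, ts, (le_max_left _ _).trans (hts ts le_rfl).1, fun τ0 hτ0 v hv h0 => ?_⟩
  have hτ0_pos : 0 < τ0 := by linarith [le_max_right t0 1, (hts τ0 hτ0).1]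
  have hclose := hv.isPerturbedSolution.abs_sub_le habove hbelow hk hη hτ0_pos
    (fun t ht => (hts t (hτ0.trans ht)).2) h0
  exact ⟨fun t ht => by linarith [hclose t ht], fun hnq =>
    hv.isPerturbedSolution.tendsto habove hbelow hk hq hnq hτ0_pos hclose⟩

/-- a zero `V_c ∈ (0,d0)` of `Λ` with `Λ'(V_c) < 0` attracts:
solutions starting near `V_c` at a late enough time stay near `V_c`, and if
`n ≤ q` they converge to `V_c`. -/
theorem stable_limit_cycle
    (q n : ℕ) (hq : 0 < q) (hn : 0 < n)
    (d0 t0 M : ℝ) (hd0 : 0 < d0) (ht0 : 0 < t0) (hM : 0 < M)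
    (Λ : ℝ → ℝ) (hΛ : ContDiffOn ℝ 1 Λ (Set.Icc (0:ℝ) d0))
    (Vc : ℝ) (hVc : Vc ∈ Set.Ioo (0:ℝ) d0) (hΛVc : Λ Vc = 0)
    (hΛ' : deriv Λ Vc < 0) :
    ∀ ε > 0, ∃ δ > 0, ∃ ts ≥ t0, ∀ τ0 ≥ ts,
      ∀ v : ℝ → ℝ, IsAdmissibleCycle q n d0 M τ0 Λ v → |v τ0 - Vc| ≤ δ →
        (∀ t ≥ τ0, |v t - Vc| < ε) ∧
        (n ≤ q → Filter.Tendsto v Filter.atTop (nhds Vc)) :=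
  stable_limit_cycle_general q n hq d0 t0 M Λ hΛ Vc hVc hΛVc hΛ'
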